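/- In the correlated binary database model with the counting-frequency Laplace mechanism, for every y ≤ 0 one has P_{Y|D₁=1}(y) ≤ P_{Y|D₁=0}(y). -/

import Mathlib

/-!
Write `q = (1 - η) / (2ⁿ - 1)` for the weight of a non-constant tail, so that both conditional
densities are `q`-weighted sums over the tail `d`, plus an extra `η - q ≥ 0` on one constant tail.
For `y ≤ 0` every location `‖x‖₁ / (n + 1) ≥ 0` lies to the right of `y`, where the Laplace density
is antitone in its location. Setting `D₁ = 1` moves the location of each tail to the right, and the
extra weight sits at location `1` for `D₁ = 1` but at location `0` for `D₁ = 0`; so the first sum is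
termwise at most the second.
-/

open Finset

/-- The density at `y` of the Laplace distribution with location `μ` and scale `b`. -/
noncomputable def laplacePdf (μ b y : ℝ) : ℝ :=
  1 / (2 * b) * Real.exp (-|y - μ| / b)

theorem laplacePdf_antitoneOn {b : ℝ} (hb : 0 < b) (y : ℝ) :
    AntitoneOn (fun μ => laplacePdf μ b y) (Set.Ici y) := by
  intro μ hμ ν hν hμν
  simp only [laplacePdf, abs_sub_comm y, abs_of_nonneg (sub_nonneg.2 (Set.mem_Ici.1 hμ)),
    abs_of_nonneg (sub_nonneg.2 (Set.mem_Ici.1 hν))]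
  gcongr

theorem sum_ite_eq_mul {α : Type*} [Fintype α] [DecidableEq α] (t : α) (a q : ℝ)
    (g : α → ℝ) :
    ∑ d, (if d = t then a else q) * g d = (a - q) * g t + ∑ d, q * g d := by
  have hsplit : ∀ d, (if d = t then a else q) * g d
      = (if d = t then (a - q) * g d else 0) + q * g d := by
    intro d
    split_ifs <;> ring
  rw [sum_congr rfl fun d _ => hsplit d, sum_add_distrib,
    sum_ite_eq' univ t, if_pos (mem_univ t)]

theorem sum_ite_mul_le_sum_ite_mul {α : Type*} [Fintype α] [DecidableEq α] (s t : α)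
    {a q : ℝ} (hq : 0 ≤ q) (hqa : q ≤ a) {g h : α → ℝ} (hgh : ∀ d, g d ≤ h d)
    (hst : g s ≤ h t) :
    ∑ d, (if d = s then a else q) * g d ≤ ∑ d, (if d = t then a else q) * h d := by
  rw [sum_ite_eq_mul, sum_ite_eq_mul]
  exact add_le_add (mul_le_mul_of_nonneg_left hst (sub_nonneg.2 hqa))
    (sum_le_sum fun d _ => mul_le_mul_of_nonneg_left (hgh d) hq)

theorem div_sub_one_nonneg {N η : ℝ} (hN : 1 ≤ N) (hη : η ≤ 1) : 0 ≤ (1 - η) / (N - 1) :=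
  div_nonneg (sub_nonneg.2 hη) (sub_nonneg.2 hN)

theorem div_sub_one_le {N η : ℝ} (hN : 1 ≤ N) (hNη : 1 ≤ N * η) : (1 - η) / (N - 1) ≤ η := by
  have hη : 0 ≤ η := by nlinarith
  exact div_le_of_le_mul₀ (sub_nonneg.2 hN) hη (by linarith)

theorem cond_density_one_le_zero_general {n : ℕ} (b η y : ℝ)
    (hb : 0 < b) (hη1 : η < 1) (hηn : 1 ≤ (2 : ℝ) ^ n * η) (hy : y ≤ 0) :
    (∑ d : Fin n → Bool,
        (if d = (fun _ => true) then η else (1 - η) / ((2 : ℝ) ^ n - 1)) *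
          ((1 / (2 * b)) * Real.exp (-|y - (1 +
            ((Finset.univ.filter (fun j => d j = true)).card : ℝ)) / (n + 1)| / b))) ≤
    (∑ d : Fin n → Bool,
        (if d = (fun _ => false) then η else (1 - η) / ((2 : ℝ) ^ n - 1)) *
          ((1 / (2 * b)) * Real.exp (-|y -
            ((Finset.univ.filter (fun j => d j = true)).card : ℝ) / (n + 1)| / b))) := by
  have h2n : (1 : ℝ) ≤ 2 ^ n := one_le_pow₀ one_le_two
  have hshift : ∀ k l : ℝ, 0 ≤ k → k ≤ l →
      laplacePdf (l / (n + 1)) b y ≤ laplacePdf (k / (n + 1)) b y := fun k l hk hkl =>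
    laplacePdf_antitoneOn hb y (Set.mem_Ici.2 (hy.trans (by positivity)))
      (Set.mem_Ici.2 (hy.trans (div_nonneg (hk.trans hkl) (by positivity)))) (by gcongr)
  refine sum_ite_mul_le_sum_ite_mul (fun _ => true) (fun _ => false)
    (div_sub_one_nonneg h2n hη1.le) (div_sub_one_le h2n hηn)
    (g := fun d => laplacePdf ((1 + (#{j | d j = true} : ℝ)) / (n + 1)) b y)
    (h := fun d => laplacePdf ((#{j | d j = true} : ℝ) / (n + 1)) b y)
    (fun d => hshift _ _ (Nat.cast_nonneg _) (le_add_of_nonneg_left zero_le_one))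
    (hshift _ _ (Nat.cast_nonneg _) (by simp [add_nonneg]))

/-- For every `y ≤ 0`, the conditional density given `D₁ = 1` is at most the
conditional density given `D₁ = 0`. -/
theorem cond_density_one_le_zero {n : ℕ} (hn : 1 ≤ n) (b η y : ℝ)
    (hb : 0 < b) (hη0 : 0 < η) (hη1 : η < 1) (hηn : 1 ≤ (2 : ℝ) ^ n * η) (hy : y ≤ 0) :
    (∑ d : Fin n → Bool,
        (if d = (fun _ => true) then η else (1 - η) / ((2 : ℝ) ^ n - 1)) *
          ((1 / (2 * b)) * Real.exp (-|y - (1 +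
            ((Finset.univ.filter (fun j => d j = true)).card : ℝ)) / (n + 1)| / b))) ≤
    (∑ d : Fin n → Bool,
        (if d = (fun _ => false) then η else (1 - η) / ((2 : ℝ) ^ n - 1)) *
          ((1 / (2 * b)) * Real.exp (-|y -
            ((Finset.univ.filter (fun j => d j = true)).card : ℝ) / (n + 1)| / b))) :=
  cond_density_one_le_zero_general b η y hb hη1 hηn hy
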